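/- Let Λ be a lattice spanning X ⊆ ℝᵐ with Voronoi cell V (restricted to X) and let W be unit vectors with R_w(Λ) = Λ for all w ∈ W; let G be the (finite) generated reflection group, K = {x ∈ X : x·w ≥ 0 ∀ w ∈ W} with nonempty relative interior, and V₁ = K ∩ V. Then for every x ∈ K, dist(V, x + V) = 2·dist(V₁, x/2). -/

import Mathlib

/-!
As `V` is convex and symmetric, `dist a (x + b) = 2 * dist (x / 2) ((a - b) / 2)` with
`(a - b) / 2 ∈ V`, so the left side is `2 * infDist (x / 2) V`. It remains to show that for
`p ∈ K` the distance from `p` to `V` is already attained on `K ∩ V`.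

The reflections `R_w` preserve norms and `V`, and
`‖q - R_w c‖ ^ 2 = ‖q - c‖ ^ 2 + 4 * ⟪c, w⟫ * ⟪q, w⟫`. Hence if `⟪q, w⟫ > 0` for every wall `w`
not orthogonal to `X`, a point of the compact set `V ∩ sphere 0 ‖c‖` closest to `q` lies in `K`.
A relative interior point `x₀` of `K` has `⟪x₀, w⟫ > 0` for all such walls, so this applies to
`q = p + δ • x₀`, and `δ → 0` gives `infDist p (K ∩ V) ≤ dist p c` for every `c ∈ V`.
-/

open scoped RealInnerProductSpace

open Filter Metric Set Submodule Topology

theorem sInf_dist_add_eq_two_mul_infDist {E : Type*} [NormedAddCommGroup E] [NormedSpace ℝ E]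
    {V : Set E} (hconv : Convex ℝ V) (hneg : ∀ a ∈ V, -a ∈ V) (x : E) :
    sInf {d : ℝ | ∃ a ∈ V, ∃ b ∈ V, d = dist a (x + b)} = 2 * infDist ((1 / 2 : ℝ) • x) V := by
  have himage : {d : ℝ | ∃ a ∈ V, ∃ b ∈ V, d = dist a (x + b)}
      = (fun c => 2 * dist ((1 / 2 : ℝ) • x) c) '' V := by
    ext d
    constructor
    · rintro ⟨a, ha, b, hb, rfl⟩
      refine ⟨(1 / 2 : ℝ) • a + (1 / 2 : ℝ) • -b,
        hconv ha (hneg b hb) (by norm_num) (by norm_num) (by norm_num), ?_⟩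
      dsimp only
      rw [dist_eq_norm, dist_eq_norm, ← norm_neg (a - _),
        show -(a - (x + b)) = (2 : ℝ) • ((1 / 2 : ℝ) • x - ((1 / 2 : ℝ) • a + (1 / 2 : ℝ) • -b))
          by module, norm_smul, Real.norm_two]
    · rintro ⟨c, hc, rfl⟩
      refine ⟨c, hc, -c, hneg c hc, ?_⟩
      dsimp only
      rw [dist_eq_norm, dist_eq_norm, ← norm_neg (c - _),
        show -(c - (x + -c)) = (2 : ℝ) • ((1 / 2 : ℝ) • x - c) by module, norm_smul, Real.norm_two]
  rw [himage, sInf_image', infDist_eq_iInf, Real.mul_iInf_of_nonneg zero_le_two]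

variable {F : Type*} [NormedAddCommGroup F] [InnerProductSpace ℝ F]

section Reflection

variable {w : F}

theorem reflection_orthogonal_singleton_apply (hw : ‖w‖ = 1) (z : F) :
    reflection (ℝ ∙ w)ᗮ z = z - (2 * ⟪z, w⟫) • w := by
  rw [reflection_orthogonal_apply, reflection_singleton_apply, hw, real_inner_comm]
  module

theorem dist_reflection_sq (hw : ‖w‖ = 1) (q s : F) :
    dist q (reflection (ℝ ∙ w)ᗮ s) ^ 2 = dist q s ^ 2 + 4 * ⟪s, w⟫ * ⟪q, w⟫ := by
  rw [reflection_orthogonal_singleton_apply hw, dist_eq_norm, dist_eq_norm,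
    show q - (s - (2 * ⟪s, w⟫) • w) = (q - s) + (2 * ⟪s, w⟫) • w by abel,
    norm_add_sq_real, norm_smul, real_inner_smul_right, inner_sub_left, Real.norm_eq_abs,
    mul_pow, sq_abs, hw]
  ring

theorem dist_reflection_lt {q s : F} (hw : ‖w‖ = 1) (hs : ⟪s, w⟫ < 0) (hq : 0 < ⟪q, w⟫) :
    dist q (reflection (ℝ ∙ w)ᗮ s) < dist q s := by
  refine lt_of_pow_lt_pow_left₀ 2 dist_nonneg ?_
  rw [dist_reflection_sq hw]
  nlinarith [mul_neg_of_neg_of_pos hs hq]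

end Reflection

theorem exists_forall_inner_nonneg_dist_le {S W : Set F} (hS : IsCompact S)
    (hW : ∀ w ∈ W, ‖w‖ = 1) (hSW : ∀ w ∈ W, ∀ s ∈ S, reflection (ℝ ∙ w)ᗮ s ∈ S) {q : F}
    (hq : ∀ w ∈ W, ∀ s ∈ S, ⟪s, w⟫ < 0 → 0 < ⟪q, w⟫) {c : F} (hc : c ∈ S) :
    ∃ s ∈ S, (∀ w ∈ W, 0 ≤ ⟪s, w⟫) ∧ dist q s ≤ dist q c := by
  obtain ⟨s, hs, hmin⟩ :=
    hS.exists_isMinOn ⟨c, hc⟩ (continuous_const.dist continuous_id).continuousOn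
  refine ⟨s, hs, fun w hw => ?_, hmin hc⟩
  by_contra! hneg
  exact (hmin (hSW w hw s hs)).not_gt (dist_reflection_lt (hW w hw) hneg (hq w hw s hs hneg))

theorem inner_eq_zero_of_inner_nonneg_near {X : Submodule ℝ F} {x₀ w : F} {ε : ℝ}
    (hx₀ : x₀ ∈ X) (hε : 0 < ε) (hnonneg : ∀ y ∈ X, dist y x₀ < ε → 0 ≤ ⟪y, w⟫)
    (hx₀w : ⟪x₀, w⟫ = 0) {y : F} (hy : y ∈ X) : ⟪y, w⟫ = 0 := by
  have key : ∀ y ∈ X, 0 ≤ ⟪y, w⟫ := by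
    intro y hy
    have hT : Tendsto (fun t : ℝ => x₀ + t • y) (𝓝 0) (𝓝 x₀) :=
      (by fun_prop : Continuous fun t : ℝ => x₀ + t • y).tendsto' 0 x₀ (by simp)
    have hnear : ∀ᶠ t : ℝ in 𝓝[>] 0, dist (x₀ + t • y) x₀ < ε :=
      (tendsto_nhdsWithin_of_tendsto_nhds hT).eventually (ball_mem_nhds x₀ hε)
    obtain ⟨t, ht, ht₀⟩ := (hnear.and self_mem_nhdsWithin).exists
    have := hnonneg _ (X.add_mem hx₀ (X.smul_mem t hy)) ht
    rw [inner_add_left, hx₀w, real_inner_smul_left, zero_add] at this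
    exact nonneg_of_mul_nonneg_right this ht₀
  exact le_antisymm (by simpa using key (-y) (X.neg_mem hy)) (key y hy)

def fundamentalCone (X : Submodule ℝ F) (W : Set F) : Set F :=
  {x | x ∈ X ∧ ∀ w ∈ W, 0 ≤ ⟪x, w⟫}

section FundamentalCone

variable {X : Submodule ℝ F} {W V : Set F} {x₀ p c : F} {ε : ℝ}

theorem infDist_inter_fundamentalCone_le_dist [ProperSpace F] (hVc : IsClosed V)
    (hVX : V ⊆ X) (hW : ∀ w ∈ W, ‖w‖ = 1) (hVW : ∀ w ∈ W, ∀ a ∈ V, reflection (ℝ ∙ w)ᗮ a ∈ V)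
    (hx₀ : x₀ ∈ fundamentalCone X W) (hε : 0 < ε)
    (hball : ∀ y ∈ X, dist y x₀ < ε → y ∈ fundamentalCone X W)
    (hp : p ∈ fundamentalCone X W) (hc : c ∈ V) :
    infDist p (fundamentalCone X W ∩ V) ≤ dist p c := by
  have horth : ∀ w ∈ W, ⟪x₀, w⟫ = 0 → ∀ y ∈ X, ⟪y, w⟫ = 0 := fun w hw hx₀w y hy =>
    inner_eq_zero_of_inner_nonneg_near hx₀.1 hε (fun y hy hd => (hball y hy hd).2 w hw) hx₀w hy
  have hshift : ∀ δ > (0 : ℝ), infDist (p + δ • x₀) (fundamentalCone X W ∩ V)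
      ≤ dist (p + δ • x₀) c := by
    intro δ hδ
    have hS : IsCompact (V ∩ sphere 0 ‖c‖) := (isCompact_sphere 0 ‖c‖).inter_left hVc
    have hSW : ∀ w ∈ W, ∀ s ∈ V ∩ sphere 0 ‖c‖, reflection (ℝ ∙ w)ᗮ s ∈ V ∩ sphere 0 ‖c‖ :=
      fun w hw s hs => ⟨hVW w hw s hs.1, by simpa using hs.2⟩
    have hq : ∀ w ∈ W, ∀ s ∈ V ∩ sphere 0 ‖c‖, ⟪s, w⟫ < 0 → 0 < ⟪p + δ • x₀, w⟫ := by
      intro w hw s hs hsw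
      rw [inner_add_left, real_inner_smul_left]
      rcases (hx₀.2 w hw).lt_or_eq with hx₀w | hx₀w
      · exact add_pos_of_nonneg_of_pos (hp.2 w hw) (mul_pos hδ hx₀w)
      · exact absurd (horth w hw hx₀w.symm s (hVX hs.1)) hsw.ne
    have hcS : c ∈ V ∩ sphere 0 ‖c‖ := ⟨hc, by simp⟩
    obtain ⟨s, hs, hsW, hsc⟩ := exists_forall_inner_nonneg_dist_le hS hW hSW hq hcS
    have hsK : s ∈ fundamentalCone X W ∩ V := ⟨⟨hVX hs.1, hsW⟩, hs.1⟩
    exact (infDist_le_dist_of_mem hsK).trans hsc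
  have hT : Tendsto (fun δ : ℝ => p + δ • x₀) (𝓝[>] 0) (𝓝 p) :=
    tendsto_nhdsWithin_of_tendsto_nhds
      ((by fun_prop : Continuous fun δ : ℝ => p + δ • x₀).tendsto' 0 p (by simp))
  exact (isClosed_le (continuous_infDist_pt _) (continuous_id.dist continuous_const)).mem_of_tendsto
    hT (eventually_nhdsWithin_of_forall hshift)

theorem infDist_inter_fundamentalCone [ProperSpace F] (hVc : IsClosed V) (hVX : V ⊆ X)
    (hne : (fundamentalCone X W ∩ V).Nonempty) (hW : ∀ w ∈ W, ‖w‖ = 1)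
    (hVW : ∀ w ∈ W, ∀ a ∈ V, reflection (ℝ ∙ w)ᗮ a ∈ V)
    (hx₀ : x₀ ∈ fundamentalCone X W) (hε : 0 < ε)
    (hball : ∀ y ∈ X, dist y x₀ < ε → y ∈ fundamentalCone X W)
    (hp : p ∈ fundamentalCone X W) :
    infDist p (fundamentalCone X W ∩ V) = infDist p V :=
  le_antisymm
    ((le_infDist (hne.mono inter_subset_right)).2 fun _ hc =>
      infDist_inter_fundamentalCone_le_dist hVc hVX hW hVW hx₀ hε hball hp hc)
    (infDist_le_infDist_of_subset inter_subset_right hne)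

end FundamentalCone

def voronoiCell (X : Submodule ℝ F) (Λ : Set F) : Set F :=
  {x | x ∈ X ∧ ∀ z ∈ Λ, ‖x‖ ≤ ‖x - z‖}

section VoronoiCell

variable {X : Submodule ℝ F} {Λ : Set F} {a : F}

theorem voronoiCell_eq_inter_halfSpaces (X : Submodule ℝ F) (Λ : Set F) :
    voronoiCell X Λ = (X : Set F) ∩ ⋂ z ∈ Λ, {x | ⟪x, z⟫ ≤ ‖z‖ ^ 2 / 2} := by
  ext x
  simp only [voronoiCell, mem_ofPred_eq, mem_inter_iff, mem_iInter, SetLike.mem_coe]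
  refine and_congr_right fun _ => forall₂_congr fun z _ => ?_
  rw [← sq_le_sq₀ (norm_nonneg _) (norm_nonneg _), norm_sub_sq_real]
  constructor <;> intro h <;> linarith

theorem convex_voronoiCell (X : Submodule ℝ F) (Λ : Set F) : Convex ℝ (voronoiCell X Λ) := by
  rw [voronoiCell_eq_inter_halfSpaces]
  exact X.convex.inter <| convex_iInter₂ fun z _ =>
    convex_halfSpace_le (f := fun x => ⟪x, z⟫)
      ⟨fun a b => inner_add_left a b z, fun r a => real_inner_smul_left a z r⟩ _

theorem isClosed_voronoiCell [FiniteDimensional ℝ F] (X : Submodule ℝ F) (Λ : Set F) :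
    IsClosed (voronoiCell X Λ) := by
  rw [voronoiCell_eq_inter_halfSpaces]
  exact X.closed_of_finiteDimensional.inter <| isClosed_biInter fun z _ =>
    isClosed_le (by fun_prop : Continuous fun x : F => ⟪x, z⟫) continuous_const

theorem zero_mem_voronoiCell : (0 : F) ∈ voronoiCell X Λ :=
  ⟨X.zero_mem, fun z _ => by simp⟩

theorem neg_mem_voronoiCell (hΛ : ∀ z ∈ Λ, -z ∈ Λ) (ha : a ∈ voronoiCell X Λ) :
    -a ∈ voronoiCell X Λ := by
  refine ⟨X.neg_mem ha.1, fun z hz => ?_⟩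
  calc ‖-a‖ = ‖a‖ := norm_neg a
    _ ≤ ‖a - -z‖ := ha.2 _ (hΛ z hz)
    _ = ‖-a - z‖ := by rw [← norm_neg]; congr 1; abel

theorem map_mem_voronoiCell_span (f : F ≃ₗᵢ[ℝ] F) (hf : ∀ z ∈ Λ, f z ∈ Λ)
    (hf_symm : ∀ z ∈ Λ, f.symm z ∈ Λ) (ha : a ∈ voronoiCell (span ℝ Λ) Λ) :
    f a ∈ voronoiCell (span ℝ Λ) Λ := by
  have hspan : span ℝ Λ ≤ (span ℝ Λ).comap f.toLinearMap :=
    span_le.mpr fun z hz => subset_span (hf z hz)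
  refine ⟨hspan ha.1, fun z hz => ?_⟩
  calc ‖f a‖ = ‖a‖ := f.norm_map a
    _ ≤ ‖a - f.symm z‖ := ha.2 _ (hf_symm z hz)
    _ = ‖f a - z‖ := by rw [← f.norm_map, map_sub, f.apply_symm_apply]

end VoronoiCell

theorem dist_voronoi_eq_dist_fundamental_cone_general
    (m n : ℕ) (v : Fin n → EuclideanSpace ℝ (Fin m))
    (Λ : Set (EuclideanSpace ℝ (Fin m)))
    (hΛ : Λ = (Submodule.span ℤ (Set.range v) : Submodule ℤ (EuclideanSpace ℝ (Fin m))))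
    (X : Submodule ℝ (EuclideanSpace ℝ (Fin m)))
    (hX : X = Submodule.span ℝ (Set.range v))
    (W : Finset (EuclideanSpace ℝ (Fin m)))
    (hW : ∀ w ∈ W, ‖w‖ = 1)
    -- each reflection R_w maps Λ onto itself
    (hrefl : ∀ w ∈ W, ∀ z ∈ Λ, z - (2 * ⟪z, w⟫) • w ∈ Λ)
    (K : Set (EuclideanSpace ℝ (Fin m)))
    (hK : K = {x | x ∈ X ∧ ∀ w ∈ W, 0 ≤ ⟪x, w⟫})
    -- K has nonempty relative interior in X
    (hKint : ∃ x ∈ K, ∃ ε > (0 : ℝ), ∀ y ∈ X, dist y x < ε → y ∈ K)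
    (V V₁ : Set (EuclideanSpace ℝ (Fin m)))
    (hV : V = {x | x ∈ X ∧ ∀ z ∈ Λ, ‖x‖ ≤ ‖x - z‖})
    (hV₁ : V₁ = K ∩ V) :
    ∀ x ∈ K,
      sInf {d : ℝ | ∃ a ∈ V, ∃ b ∈ V, d = dist a (x + b)}
        = 2 * Metric.infDist ((1 / 2 : ℝ) • x) V₁ := by
  intro x hx
  obtain rfl : K = fundamentalCone X W := hK
  obtain rfl : V = voronoiCell X Λ := hV
  obtain rfl : X = span ℝ Λ := by rw [hX, hΛ, span_span_of_tower]
  subst hV₁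
  obtain ⟨x₀, hx₀, ε, hε, hball⟩ := hKint
  have hRΛ : ∀ w ∈ W, ∀ z ∈ Λ, reflection (ℝ ∙ w)ᗮ z ∈ Λ := fun w hw z hz => by
    rw [reflection_orthogonal_singleton_apply (hW w hw)]
    exact hrefl w hw z hz
  have hRV : ∀ w ∈ W, ∀ a ∈ voronoiCell (span ℝ Λ) Λ,
      reflection (ℝ ∙ w)ᗮ a ∈ voronoiCell (span ℝ Λ) Λ :=
    fun w hw _ => map_mem_voronoiCell_span _ (hRΛ w hw) (by simpa using hRΛ w hw)
  have hΛneg : ∀ z ∈ Λ, -z ∈ Λ := by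
    subst hΛ
    exact fun z hz => neg_mem hz
  have hp : (1 / 2 : ℝ) • x ∈ fundamentalCone (span ℝ Λ) W :=
    ⟨smul_mem _ _ hx.1, fun w hw => by
      rw [real_inner_smul_left]
      exact mul_nonneg (by norm_num) (hx.2 w hw)⟩
  have hne : (fundamentalCone (span ℝ Λ) W ∩ voronoiCell (span ℝ Λ) Λ).Nonempty :=
    ⟨0, ⟨zero_mem _, by simp⟩, zero_mem_voronoiCell⟩
  rw [sInf_dist_add_eq_two_mul_infDist (convex_voronoiCell _ Λ)
      (fun _ => neg_mem_voronoiCell hΛneg),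
    infDist_inter_fundamentalCone (isClosed_voronoiCell _ Λ) (fun _ ha => ha.1) hne hW hRV
      hx₀ hε hball hp]

/-- Let `Λ` be a lattice spanning `X ⊆ ℝᵐ` with Voronoi cell `V` (restricted to `X`),
invariant under the reflections `R_w` for unit vectors `w ∈ W`; let
`K = {x ∈ X : x·w ≥ 0 ∀ w ∈ W}` have nonempty relative interior, and `V₁ = K ∩ V`.
Then for every `x ∈ K`, `dist(V, x + V) = 2·dist(V₁, x/2)`. -/
theorem dist_voronoi_eq_dist_fundamental_cone
    (m n : ℕ) (v : Fin n → EuclideanSpace ℝ (Fin m))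
    (hv : LinearIndependent ℝ v)
    (Λ : Set (EuclideanSpace ℝ (Fin m)))
    (hΛ : Λ = (Submodule.span ℤ (Set.range v) : Submodule ℤ (EuclideanSpace ℝ (Fin m))))
    (X : Submodule ℝ (EuclideanSpace ℝ (Fin m)))
    (hX : X = Submodule.span ℝ (Set.range v))
    (W : Finset (EuclideanSpace ℝ (Fin m)))
    (hW : ∀ w ∈ W, ‖w‖ = 1)
    -- each reflection R_w maps Λ onto itself
    (hrefl : ∀ w ∈ W, ∀ z ∈ Λ, z - (2 * ⟪z, w⟫) • w ∈ Λ)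
    (K : Set (EuclideanSpace ℝ (Fin m)))
    (hK : K = {x | x ∈ X ∧ ∀ w ∈ W, 0 ≤ ⟪x, w⟫})
    -- K has nonempty relative interior in X
    (hKint : ∃ x ∈ K, ∃ ε > (0 : ℝ), ∀ y ∈ X, dist y x < ε → y ∈ K)
    (V V₁ : Set (EuclideanSpace ℝ (Fin m)))
    (hV : V = {x | x ∈ X ∧ ∀ z ∈ Λ, ‖x‖ ≤ ‖x - z‖})
    (hV₁ : V₁ = K ∩ V) :
    ∀ x ∈ K,
      sInf {d : ℝ | ∃ a ∈ V, ∃ b ∈ V, d = dist a (x + b)}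
        = 2 * Metric.infDist ((1 / 2 : ℝ) • x) V₁ :=
  dist_voronoi_eq_dist_fundamental_cone_general m n v Λ hΛ X hX W hW hrefl K hK hKint V V₁ hV hV₁
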